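/- arXiv:2503.15568 — 2 statements merged into one kernel-verified Lean document; each statement's English description precedes it below -/
import Mathlib

section
/- The function g(x) = x(1 − tanh(x)²)/tanh(x), extended by g(0) = 1, is even, takes values in (0, 1], and is monotonically decreasing on [0, ∞). -/
/-!
Since `1 - tanh² x = 1 / cosh² x`, the function equals `2x / sinh 2x` away from `0`. The map
`t ↦ t / sinh t` is even, and on `(0, ∞)` it is the reciprocal of the slope of `sinh` from the
origin; `sinh` is convex on `[0, ∞)` (its derivative `cosh` increases there), so this slope
increases and is `> 1` because `sinh t > t`.
-/

open Real Set

namespace Real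

lemma strictConvexOn_sinh : StrictConvexOn ℝ (Ici 0) sinh :=
  StrictMonoOn.strictConvexOn_of_deriv (convex_Ici 0) continuous_sinh.continuousOn <| by
    rw [deriv_sinh, interior_Ici]
    exact cosh_strictMonoOn.mono Ioi_subset_Ici_self

lemma monotoneOn_sinh_div_self : MonotoneOn (fun t => sinh t / t) (Ioi 0) := by
  intro s hs t ht hst
  simpa using strictConvexOn_sinh.convexOn.secant_mono self_mem_Ici
    (mem_Ici.2 (le_of_lt hs)) (mem_Ici.2 (le_of_lt ht)) (ne_of_gt hs) (ne_of_gt ht) hst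

lemma antitoneOn_self_div_sinh : AntitoneOn (fun t => t / sinh t) (Ioi 0) := by
  intro s hs t ht hst
  have hs' : 0 < sinh s / s := div_pos (sinh_pos_iff.2 hs) hs
  simpa only [inv_div] using inv_anti₀ hs' (monotoneOn_sinh_div_self hs ht hst)

lemma neg_div_sinh_neg (t : ℝ) : -t / sinh (-t) = t / sinh t := by
  rw [sinh_neg, neg_div_neg_eq]

lemma self_div_sinh_mem_Ioo {t : ℝ} (ht : t ≠ 0) : t / sinh t ∈ Ioo 0 1 := by
  wlog hpos : 0 < t generalizing t
  · rw [← neg_div_sinh_neg]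
    exact this (neg_ne_zero.2 ht) (by linarith [lt_of_le_of_ne (not_lt.1 hpos) ht])
  have hsinh : 0 < sinh t := sinh_pos_iff.2 hpos
  exact ⟨div_pos hpos hsinh, (div_lt_one hsinh).2 (self_lt_sinh_iff.2 hpos)⟩

lemma mul_one_sub_tanh_sq_div_tanh (x : ℝ) :
    x * (1 - tanh x ^ 2) / tanh x = 2 * x / sinh (2 * x) := by
  rcases eq_or_ne x 0 with rfl | hx
  · simp
  have hc : cosh x ≠ 0 := (cosh_pos x).ne'
  have hs : sinh x ≠ 0 := sinh_ne_zero.2 hx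
  rw [tanh_eq_sinh_div_cosh, sinh_two_mul]
  field_simp
  exact cosh_sq_sub_sinh_sq x

end Real

/-- g(x) = x(1 − tanh²x)/tanh x, with g(0) = 1, is even, has values in (0,1],
    and is monotonically decreasing on [0, ∞). -/
theorem stmt_6 (g : ℝ → ℝ)
    (hg : ∀ x, g x = if x = 0 then 1 else x * (1 - Real.tanh x ^ 2) / Real.tanh x) :
    (∀ x, g (-x) = g x) ∧
    (∀ x, g x ∈ Set.Ioc (0 : ℝ) 1) ∧
    AntitoneOn g (Set.Ici (0 : ℝ)) := by
  have hg0 : g 0 = 1 := by simp [hg]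
  have hg' : ∀ x ≠ 0, g x = 2 * x / sinh (2 * x) := fun x hx => by
    rw [hg, if_neg hx, mul_one_sub_tanh_sq_div_tanh]
  have hmem : ∀ x, g x ∈ Ioc (0 : ℝ) 1 := fun x => by
    rcases eq_or_ne x 0 with rfl | hx
    · simp [hg0]
    · rw [hg' x hx]
      exact Ioo_subset_Ioc_self (self_div_sinh_mem_Ioo (mul_ne_zero two_ne_zero hx))
  refine ⟨fun x => ?_, hmem, fun a ha b hb hab => ?_⟩
  · rcases eq_or_ne x 0 with rfl | hx
    · simp
    · rw [hg' _ (neg_ne_zero.2 hx), hg' x hx, mul_neg, neg_div_sinh_neg]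
  · rcases (mem_Ici.1 ha).eq_or_lt with rfl | ha
    · exact hg0 ▸ (hmem b).2
    · have hb : 0 < b := ha.trans_le hab
      rw [hg' a ha.ne', hg' b hb.ne']
      exact antitoneOn_self_div_sinh (mul_pos two_pos ha) (mul_pos two_pos hb) (by linarith)
end

section
/- Componentwise forward error recurrence for one layer: let h_{ℓ−1} ∈ ℝ^{n_{ℓ−1}} be the exact previous output and ĥ_{ℓ−1} = h_{ℓ−1} ∘ (1+Δh_{ℓ−1}) with |Δh_{ℓ−1}| ≤ ε^h_{ℓ−1}. Suppose the computed layer output satisfies ĥ_ℓ = φ_ℓ((W_ℓ ∘ (1+ΔW_ℓ)) ĥ_{ℓ−1}) ∘ (1+Δφ_ℓ) with |ΔW_ℓ| ≤ ε^W_ℓ (rowwise) and |Δφ_ℓ| ≤ ε^φ_ℓ. Set v_ℓ = W_ℓ h_{ℓ−1}, assume (v_ℓ)_i ≠ 0 and φ_ℓ((v_ℓ)_i) ≠ 0 for all i, and let κ_{v_ℓ} = (|W_ℓ||h_{ℓ−1}|) ⊘ |v_ℓ| and κ_{φ_ℓ}(v_ℓ) be the componentwise activation condition number satisfying the perturbation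 identity φ_ℓ(v∘(1+Δv)) = φ_ℓ(v)∘(1+κ_{φ_ℓ}(v)∘(±Δv)). Then ĥ_ℓ = h_ℓ ∘ (1+Δh_ℓ) with |Δh_ℓ| ≤ κ_{φ_ℓ}(v_ℓ) ∘ κ_{v_ℓ} ∘ (ε^W_ℓ + ‖ε^h_{ℓ−1}‖_∞ (1 + ε^W_ℓ)) ∘ (1 + ε^φ_ℓ) + ε^φ_ℓ, where h_ℓ = φ_ℓ(v_ℓ). -/
/-!
Write `p = (W ∘ (1 + ΔW)) ĥ_{ℓ-1}` for the computed pre-activation. Each summand of `p - v` is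
`W_ij h_j ((1 + ΔW_ij)(1 + Δh_j) - 1)`, and that relative factor is at most
`ε^W_i + ‖ε^h‖_∞ (1 + ε^W_i)` in absolute value, so `|p_i - v_i| ≤ (|W| |h|)_i (ε^W_i + ‖ε^h‖_∞ (1 + ε^W_i))`.
Dividing by `|v_i|`, the relative error `Δv_i = (p_i - v_i) / v_i` is bounded by `κ_v` times that factor.
The perturbation identity of `φ` turns `Δv` into the relative error `κ_φ (±Δv)` of `φ(p)`, and composing
it with the rounding error `Δφ` of the activation gives `Δh = κ_φ (±Δv)(1 + Δφ) + Δφ`.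
-/

open Matrix

theorem abs_one_add_mul_one_add_sub_one_le {a b α β : ℝ} (ha : |a| ≤ α) (hb : |b| ≤ β) :
    |(1 + a) * (1 + b) - 1| ≤ α + β * (1 + α) := by
  have h1a : |1 + a| ≤ 1 + α := (abs_add_le 1 a).trans (by rw [abs_one]; linarith)
  calc |(1 + a) * (1 + b) - 1| = |a + b * (1 + a)| := by ring_nf
    _ ≤ |a| + |b| * |1 + a| := by rw [← abs_mul]; exact abs_add_le _ _
    _ ≤ α + β * (1 + α) :=
        add_le_add ha (mul_le_mul hb h1a (abs_nonneg _) ((abs_nonneg _).trans hb))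

theorem abs_dotProduct_one_add_sub_dotProduct_le {ι : Type*} [Fintype ι] (w x a b : ι → ℝ)
    {α β : ℝ} (ha : ∀ j, |a j| ≤ α) (hb : ∀ j, |b j| ≤ β) :
    |(fun j => w j * (1 + a j)) ⬝ᵥ (fun j => x j * (1 + b j)) - w ⬝ᵥ x|
      ≤ (fun j => |w j|) ⬝ᵥ (fun j => |x j|) * (α + β * (1 + α)) := by
  simp only [dotProduct, ← Finset.sum_sub_distrib, Finset.sum_mul]
  refine (Finset.abs_sum_le_sum_abs _ _).trans (Finset.sum_le_sum fun j _ => ?_)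
  calc |w j * (1 + a j) * (x j * (1 + b j)) - w j * x j|
      = |w j| * |x j| * |(1 + a j) * (1 + b j) - 1| := by rw [← abs_mul, ← abs_mul]; ring_nf
    _ ≤ |w j| * |x j| * (α + β * (1 + α)) :=
        mul_le_mul_of_nonneg_left (abs_one_add_mul_one_add_sub_one_le (ha j) (hb j))
          (by positivity)

theorem abs_relError_comp_le {κ σ δ δ' B ε : ℝ} (hκ : 0 ≤ κ) (hσ : |σ| = 1) (hδ : |δ| ≤ B)
    (hδ' : |δ'| ≤ ε) :
    |κ * (σ * δ) * (1 + δ') + δ'| ≤ κ * B * (1 + ε) + ε := by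
  have h1δ' : |1 + δ'| ≤ 1 + ε := (abs_add_le 1 δ').trans (by rw [abs_one]; linarith)
  have hκδ : |κ * (σ * δ)| ≤ κ * B := by
    rw [abs_mul, abs_mul, hσ, one_mul, abs_of_nonneg hκ]
    exact mul_le_mul_of_nonneg_left hδ hκ
  calc |κ * (σ * δ) * (1 + δ') + δ'| ≤ |κ * (σ * δ)| * |1 + δ'| + |δ'| := by
        rw [← abs_mul]; exact abs_add_le _ _
    _ ≤ κ * B * (1 + ε) + ε :=
        add_le_add (mul_le_mul hκδ h1δ' (abs_nonneg _) ((abs_nonneg _).trans hκδ)) hδ'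

theorem stmt_11_general (nprev n : ℕ)
    (W ΔW : Matrix (Fin n) (Fin nprev) ℝ)
    (hprev Δhprev εhprev : Fin nprev → ℝ)
    (εW Δφ εφ : Fin n → ℝ)
    (φ : ℝ → ℝ)
    (hΔhprev : ∀ j, |Δhprev j| ≤ εhprev j)
    (hΔW : ∀ i j, |ΔW i j| ≤ εW i)
    (hΔφ : ∀ i, |Δφ i| ≤ εφ i)
    (v : Fin n → ℝ) (hv : v = W.mulVec hprev)
    (hv0 : ∀ i, v i ≠ 0)
    (κv : Fin n → ℝ)
    (hκv : ∀ i, κv i = (Matrix.mulVec (fun i j => |W i j|) (fun j => |hprev j|)) i / |v i|)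
    (κφ : Fin n → ℝ) (hκφ_nonneg : ∀ i, 0 ≤ κφ i)
    -- the activation perturbation identity φ(v∘(1+Δv)) = φ(v)∘(1+κφ(v)∘(±Δv))
    (hκφ : ∀ Δv : Fin n → ℝ, ∃ s : Fin n → ℝ, (∀ i, s i = 1 ∨ s i = -1) ∧
      ∀ i, φ (v i * (1 + Δv i)) = φ (v i) * (1 + κφ i * (s i * Δv i)))
    (hhatprev : Fin nprev → ℝ) (hhhatprev : ∀ j, hhatprev j = hprev j * (1 + Δhprev j))
    (hhat : Fin n → ℝ)
    (hhhat : ∀ i, hhat i = φ ((Matrix.mulVec (fun i j => W i j * (1 + ΔW i j)) hhatprev) i)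
        * (1 + Δφ i))
    (h : Fin n → ℝ) (hh : ∀ i, h i = φ (v i)) :
    ∃ Δh : Fin n → ℝ,
      (∀ i, hhat i = h i * (1 + Δh i)) ∧
      (∀ i, |Δh i| ≤
        κφ i * κv i * (εW i + (⨆ j, εhprev j) * (1 + εW i)) * (1 + εφ i) + εφ i) := by
  set p := (fun i j => W i j * (1 + ΔW i j)) *ᵥ hhatprev
  obtain ⟨s, hs, hφp⟩ := hκφ fun i => (p i - v i) / v i
  refine ⟨fun i => κφ i * (s i * ((p i - v i) / v i)) * (1 + Δφ i) + Δφ i, fun i => ?_,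
    fun i => ?_⟩
  · have hp_eq : v i * (1 + (p i - v i) / v i) = p i := by field_simp [hv0 i]; ring
    rw [hhhat, hh, ← hp_eq, hφp]
    ring
  · have hΔhprev_le_sup : ∀ j, |Δhprev j| ≤ ⨆ j, εhprev j :=
      fun j => (hΔhprev j).trans (le_ciSup (Set.finite_range εhprev).bddAbove j)
    have hpv : |p i - v i| ≤ (fun j => |W i j|) ⬝ᵥ (fun j => |hprev j|) *
        (εW i + (⨆ j, εhprev j) * (1 + εW i)) := by
      obtain rfl : hhatprev = fun j => hprev j * (1 + Δhprev j) := funext hhhatprev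
      subst hv
      exact abs_dotProduct_one_add_sub_dotProduct_le _ _ _ _ (hΔW i) hΔhprev_le_sup
    have hrel : |(p i - v i) / v i| ≤ κv i * (εW i + (⨆ j, εhprev j) * (1 + εW i)) := by
      rw [abs_div, hκv, div_mul_eq_mul_div]
      exact div_le_div_of_nonneg_right hpv (abs_nonneg _)
    have hs_abs : |s i| = 1 := by rcases hs i with hsi | hsi <;> simp [hsi]
    simpa only [mul_assoc] using abs_relError_comp_le (hκφ_nonneg i) hs_abs hrel (hΔφ i)

/-- Theorem 2.3 (componentwise forward error recurrence for one layer). -/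
theorem stmt_11 (nprev n : ℕ)
    (W ΔW : Matrix (Fin n) (Fin nprev) ℝ)
    (hprev Δhprev εhprev : Fin nprev → ℝ)
    (εW Δφ εφ : Fin n → ℝ)
    (φ : ℝ → ℝ)
    (hεhprev_nonneg : ∀ j, 0 ≤ εhprev j) (hεW_nonneg : ∀ i, 0 ≤ εW i)
    (hεφ_nonneg : ∀ i, 0 ≤ εφ i)
    (hΔhprev : ∀ j, |Δhprev j| ≤ εhprev j)
    (hΔW : ∀ i j, |ΔW i j| ≤ εW i)
    (hΔφ : ∀ i, |Δφ i| ≤ εφ i)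
    (v : Fin n → ℝ) (hv : v = W.mulVec hprev)
    (hv0 : ∀ i, v i ≠ 0) (hφv0 : ∀ i, φ (v i) ≠ 0)
    (κv : Fin n → ℝ)
    (hκv : ∀ i, κv i = (Matrix.mulVec (fun i j => |W i j|) (fun j => |hprev j|)) i / |v i|)
    (κφ : Fin n → ℝ) (hκφ_nonneg : ∀ i, 0 ≤ κφ i)
    -- the activation perturbation identity φ(v∘(1+Δv)) = φ(v)∘(1+κφ(v)∘(±Δv))
    (hκφ : ∀ Δv : Fin n → ℝ, ∃ s : Fin n → ℝ, (∀ i, s i = 1 ∨ s i = -1) ∧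
      ∀ i, φ (v i * (1 + Δv i)) = φ (v i) * (1 + κφ i * (s i * Δv i)))
    (hhatprev : Fin nprev → ℝ) (hhhatprev : ∀ j, hhatprev j = hprev j * (1 + Δhprev j))
    (hhat : Fin n → ℝ)
    (hhhat : ∀ i, hhat i = φ ((Matrix.mulVec (fun i j => W i j * (1 + ΔW i j)) hhatprev) i)
        * (1 + Δφ i))
    (h : Fin n → ℝ) (hh : ∀ i, h i = φ (v i)) :
    ∃ Δh : Fin n → ℝ,
      (∀ i, hhat i = h i * (1 + Δh i)) ∧
      (∀ i, |Δh i| ≤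
        κφ i * κv i * (εW i + (⨆ j, εhprev j) * (1 + εW i)) * (1 + εφ i) + εφ i) :=
  stmt_11_general nprev n W ΔW hprev Δhprev εhprev εW Δφ εφ φ hΔhprev hΔW hΔφ v hv hv0 κv hκv κφ
    hκφ_nonneg hκφ hhatprev hhhatprev hhat hhhat h hh
end
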